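/- For each x ∈ {t,b,n,f} and each corresponding truth value X ∈ {T,B,N,F}, the 4-valuation v₄ assigns v₄(x(φ)) = T if v₄(φ) = X, and v₄(x(φ)) = F otherwise, where t(φ) := △φ ∧ ¬△¬φ, b(φ) := △φ ∧ △¬φ, n(φ) := ¬△φ ∧ ¬△¬φ, f(φ) := ¬△φ ∧ △¬φ. -/

import Mathlib

inductive BDForm : Type
  | var : ℕ → BDForm
  | neg : BDForm → BDForm
  | and : BDForm → BDForm → BDForm
  | or : BDForm → BDForm → BDForm
  | delta : BDForm → BDForm
deriving DecidableEq

structure BDModel where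
  W : Type
  vp : ℕ → W → Prop
  vm : ℕ → W → Prop

def BDModel.sat (M : BDModel) : Bool → BDForm → M.W → Prop
  | true, .var p, w => M.vp p w
  | false, .var p, w => M.vm p w
  | b, .neg φ, w => M.sat (!b) φ w
  | true, .and φ ψ, w => M.sat true φ w ∧ M.sat true ψ w
  | false, .and φ ψ, w => M.sat false φ w ∨ M.sat false ψ w
  | true, .or φ ψ, w => M.sat true φ w ∨ M.sat true ψ w
  | false, .or φ ψ, w => M.sat false φ w ∧ M.sat false ψ w
  | true, .delta φ, w => M.sat true φ w
  | false, .delta φ, w => ¬ M.sat true φ w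

/-- BD△ entailment: positive extension inclusion and reverse negative inclusion, in every model. -/
def Entails (φ χ : BDForm) : Prop :=
  ∀ (M : BDModel) (w : M.W),
    (M.sat true φ w → M.sat true χ w) ∧ (M.sat false χ w → M.sat false φ w)

/-- the value-detecting formulas -/
def tF (φ : BDForm) : BDForm := (φ.delta).and ((φ.neg.delta).neg)
def bF (φ : BDForm) : BDForm := (φ.delta).and (φ.neg.delta)
def nF (φ : BDForm) : BDForm := ((φ.delta).neg).and ((φ.neg.delta).neg)
def fF (φ : BDForm) : BDForm := ((φ.delta).neg).and (φ.neg.delta)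

def topF : BDForm := ((BDForm.var 0).delta).or (((BDForm.var 0).delta).neg)
def botF : BDForm := topF.neg
inductive FourVal : Type
  | T | B | N | F
deriving DecidableEq

open FourVal in
def FourVal.negV : FourVal → FourVal
  | T => F
  | B => B
  | N => N
  | F => T

open FourVal in
def FourVal.deltaV : FourVal → FourVal
  | T => T
  | B => T
  | N => F
  | F => F

open FourVal in
def FourVal.andV : FourVal → FourVal → FourVal
  | T, x => x
  | x, T => x
  | F, _ => F
  | _, F => F
  | B, B => B
  | N, N => N
  | B, N => F
  | N, B => F

open FourVal in
def FourVal.orV : FourVal → FourVal → FourVal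
  | F, x => x
  | x, F => x
  | T, _ => T
  | _, T => T
  | B, B => B
  | N, N => N
  | B, N => T
  | N, B => T

/-- extension of a 4-valuation to all formulas, by the BD△ truth tables -/
def fval (v : ℕ → FourVal) : BDForm → FourVal
  | .var p => v p
  | .neg φ => (fval v φ).negV
  | .and φ χ => (fval v φ).andV (fval v χ)
  | .or φ χ => (fval v φ).orV (fval v χ)
  | .delta φ => (fval v φ).deltaV

/-! △φ takes the value T exactly when φ ∈ {T, B}, and △¬φ exactly when φ ∈ {B, F}. Both are
classical (T or F), so each detector is a conjunction of classical values and the four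
combinations of these two bits single out the four values of φ. -/

section

open FourVal

theorem fval_tF (v : ℕ → FourVal) (φ : BDForm) :
    fval v (tF φ) = if fval v φ = T then T else F := by
  simp only [tF, fval]
  cases fval v φ <;> rfl

theorem fval_bF (v : ℕ → FourVal) (φ : BDForm) :
    fval v (bF φ) = if fval v φ = B then T else F := by
  simp only [bF, fval]
  cases fval v φ <;> rfl

theorem fval_nF (v : ℕ → FourVal) (φ : BDForm) :
    fval v (nF φ) = if fval v φ = N then T else F := by
  simp only [nF, fval]
  cases fval v φ <;> rfl

theorem fval_fF (v : ℕ → FourVal) (φ : BDForm) :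
    fval v (fF φ) = if fval v φ = F then T else F := by
  simp only [fF, fval]
  cases fval v φ <;> rfl

end

/-- v₄(x(φ)) = T if v₄(φ) = X, and F otherwise, for each detector x ∈ {t,b,n,f}. -/
theorem stmt4 (v : ℕ → FourVal) (φ : BDForm) :
    (fval v (tF φ) = if fval v φ = FourVal.T then FourVal.T else FourVal.F) ∧
    (fval v (bF φ) = if fval v φ = FourVal.B then FourVal.T else FourVal.F) ∧
    (fval v (nF φ) = if fval v φ = FourVal.N then FourVal.T else FourVal.F) ∧
    (fval v (fF φ) = if fval v φ = FourVal.F then FourVal.T else FourVal.F) := by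
  exact ⟨fval_tF v φ, fval_bF v φ, fval_nF v φ, fval_fF v φ⟩
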